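/- The function p*(μ) is constant and equal to s_1 on I_1 = (0, μ_1], and is strictly decreasing on (μ_1, 1); consequently, for each k with 1 < k ≤ m, the image J_k := p*(I_k) satisfies J_k = [p_k, p_{k−1}) for k < m and J_m = (p_m, p_{m−1}), where p_k := p*(μ_k), and the intervals J_k for 1 < k ≤ m partition (π, s_1), with p_m = π and p_1 = s_1. -/

import Mathlib

open Finset

/-!
Single-group setting.  A finite probability space `(Ω, P)`, a binary target `Y` with
base rate `π := P(Y = 1)`, and a calibrated score `S` taking `m > 1` distinct values
`1 ≥ s_1 > ⋯ > s_m ≥ 0` (here 0-indexed: `s i` is the paper's `s_{i+1}`), each with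
positive probability `w i = P(S = s i)`, are—via calibration
`P(Y = 1 ∣ S = s i) = s i`—completely described, for the purposes of classifiers
based on `S`, by the data below.  A (possibly randomized) binary classifier `R`
based on `S` (i.e. `P(R = 1 ∣ S, Y) = P(R = 1 ∣ S)`) is in turn determined by its
selection rule `t i = P(R = 1 ∣ S = s i)`, with `P(R = 1) = ∑ i, w i * t i`,
`P(Y = 1, R = 1) = ∑ i, s i * w i * t i`, `PPV(R) = P(Y = 1 ∣ R = 1)` and
`FOR(R) = P(Y = 1 ∣ R = 0)` as given below.
-/
structure CalibScore where
  m : ℕ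
  s : ℕ → ℝ
  w : ℕ → ℝ
  one_lt_m : 1 < m
  s_nonneg : ∀ i, i < m → 0 ≤ s i
  s_le_one : ∀ i, i < m → s i ≤ 1
  s_desc : ∀ i j, i < j → j < m → s j < s i
  w_pos : ∀ i, i < m → 0 < w i
  w_sum : ∑ i ∈ Finset.range m, w i = 1

namespace CalibScore

/-- Base rate `π = P(Y = 1) = E[S]` (by calibration). -/
noncomputable def pi (D : CalibScore) : ℝ := ∑ i ∈ Finset.range D.m, D.s i * D.w i

/-- `t` is a selection rule (`t i = P(R = 1 ∣ S = s i)` for a classifier `R` based on `S`). -/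
def IsSelRule (D : CalibScore) (t : ℕ → ℝ) : Prop := ∀ i, i < D.m → 0 ≤ t i ∧ t i ≤ 1

/-- Selection rate `μ = P(R = 1)`. -/
noncomputable def selRate (D : CalibScore) (t : ℕ → ℝ) : ℝ :=
  ∑ i ∈ Finset.range D.m, D.w i * t i

/-- `P(Y = 1, R = 1) = ∑ i, s i * P(S = s i) * P(R = 1 ∣ S = s i)` (by calibration). -/
noncomputable def posSel (D : CalibScore) (t : ℕ → ℝ) : ℝ :=
  ∑ i ∈ Finset.range D.m, D.s i * D.w i * t i

/-- `PPV(R) = P(Y = 1 ∣ R = 1)`. -/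
noncomputable def ppv (D : CalibScore) (t : ℕ → ℝ) : ℝ := D.posSel t / D.selRate t

/-- `FOR(R) = P(Y = 1 ∣ R = 0)`. -/
noncomputable def forr (D : CalibScore) (t : ℕ → ℝ) : ℝ :=
  (D.pi - D.posSel t) / (1 - D.selRate t)

/-- `(p, q)` is feasible with selection rate `μ`: attained by a nonconstant
classifier based on `S` with `P(R = 1) = μ`. -/
def FeasibleWith (D : CalibScore) (μ p q : ℝ) : Prop :=
  0 < μ ∧ μ < 1 ∧ ∃ t, D.IsSelRule t ∧ D.selRate t = μ ∧ D.ppv t = p ∧ D.forr t = q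

/-- The feasible region `C`. -/
def Feasible (D : CalibScore) (p q : ℝ) : Prop := ∃ μ, D.FeasibleWith μ p q

/-- `μ_k = ∑_{i ≤ k} P(S = s_i)` (1-based `k`; `μ_0 = 0`). -/
noncomputable def muk (D : CalibScore) (k : ℕ) : ℝ := ∑ i ∈ Finset.range k, D.w i

/-- `c_k = ∑_{i < k} P(S = s_i) (s_i − s_k)` (1-based `k`). -/
noncomputable def ck (D : CalibScore) (k : ℕ) : ℝ :=
  ∑ i ∈ Finset.range (k - 1), D.w i * (D.s i - D.s (k - 1))

/-- `I_k = (μ_{k−1}, μ_k] ∩ (0, 1)` (1-based `k`). -/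
def Ik (D : CalibScore) (k : ℕ) : Set ℝ :=
  Set.Ioc (D.muk (k - 1)) (D.muk k) ∩ Set.Ioo 0 1

/-- `p*(μ)`: the supremum of `p` over pairs `(p, q)` feasible with `μ` having `q ≤ π ≤ p`. -/
noncomputable def pStar (D : CalibScore) (μ : ℝ) : ℝ :=
  sSup {p | ∃ q, D.FeasibleWith μ p q ∧ q ≤ D.pi ∧ D.pi ≤ p}

/-- `q*(μ)`: the infimum of `q` over pairs `(p, q)` feasible with `μ` having `q ≤ π ≤ p`. -/
noncomputable def qStar (D : CalibScore) (μ : ℝ) : ℝ :=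
  sInf {q | ∃ p, D.FeasibleWith μ p q ∧ q ≤ D.pi ∧ D.pi ≤ p}

/-- `p_k = s_k + c_k / μ_k` (1-based `k`), the breakpoint values of the boundary. -/
noncomputable def pkF (D : CalibScore) (k : ℕ) : ℝ := D.s (k - 1) + D.ck k / D.muk k

/-- The boundary formula `q(p) = ((π − c_k) p − s_k π) / (p − s_k − c_k)` on `J_k`
(1-based `k`). -/
noncomputable def qF (D : CalibScore) (k : ℕ) (p : ℝ) : ℝ :=
  ((D.pi - D.ck k) * p - D.s (k - 1) * D.pi) / (p - D.s (k - 1) - D.ck k)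

end CalibScore

/-!
For every selection rule `t` and every index `j`, `P(Y = 1, R = 1) ≤ s_j P(R = 1) + c_{j+1}`:
termwise, `w_i t_i (s_i − s_j)` is at most `w_i (s_i − s_j)` for `i < j` and at most `0`
otherwise. Equality holds for the rule that selects the `j` highest score values and randomizes
at `s_j`; for a rate `μ ∈ I_{j+1}` it is a valid classifier whose PPV is at least `π`
(Chebyshev's sum inequality), so
`p*(μ) = s_k + c_k / μ` on `I_k`. The pieces agree at the breakpoints because
`c_{k+1} = c_k + μ_k (s_k − s_{k+1})`, and for `k ≥ 2` each is a strictly decreasing hyperbola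
(`c_k > 0`). So the images of the `I_k` are the consecutive intervals between the values `p_k`,
which decrease strictly from `p_1 = s_1` to `p_m = π`.
-/

open Set

theorem exists_lt_le_succ_of_lt_of_le {α : Type*} [LinearOrder α] {f : ℕ → α} {x : α}
    (h0 : f 0 < x) : ∀ {n : ℕ}, x ≤ f n → ∃ i < n, f i < x ∧ x ≤ f (i + 1)
  | 0, hn => absurd hn h0.not_ge
  | n + 1, hn => by
    by_cases hx : x ≤ f n
    · obtain ⟨i, hi, h⟩ := exists_lt_le_succ_of_lt_of_le h0 hx
      exact ⟨i, hi.trans n.lt_succ_self, h⟩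
    · exact ⟨n, n.lt_succ_self, not_le.mp hx, hn⟩

section Hyperbola

variable {K : Type*} [Field K] [LinearOrder K] [IsStrictOrderedRing K] {s c a b : K}

theorem image_const_add_div_Ioc (hc : 0 < c) (ha : 0 < a) (hab : a ≤ b) :
    (fun x => s + c / x) '' Ioc a b = Ico (s + c / b) (s + c / a) := by
  ext p
  constructor
  · rintro ⟨x, ⟨hax, hxb⟩, rfl⟩
    have hx : 0 < x := ha.trans hax
    exact ⟨by dsimp only; gcongr, by dsimp only; gcongr⟩
  · rintro ⟨hbp, hpa⟩
    have hp : 0 < p - s := by linarith [div_pos hc (ha.trans_le hab)]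
    refine ⟨c / (p - s), ⟨?_, ?_⟩, by dsimp only; rw [div_div_cancel₀ hc.ne']; ring⟩
    · rw [lt_div_iff₀ hp, ← lt_div_iff₀' ha]; linarith
    · rw [div_le_iff₀ hp, ← div_le_iff₀' (ha.trans_le hab)]; linarith

theorem image_const_add_div_Ioo (hc : 0 < c) (ha : 0 < a) (hab : a ≤ b) :
    (fun x => s + c / x) '' Ioo a b = Ioo (s + c / b) (s + c / a) := by
  ext p
  constructor
  · rintro ⟨x, ⟨hax, hxb⟩, rfl⟩
    have hx : 0 < x := ha.trans hax
    exact ⟨by dsimp only; gcongr, by dsimp only; gcongr⟩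
  · rintro ⟨hbp, hpa⟩
    have hp : 0 < p - s := by linarith [div_pos hc (ha.trans_le hab)]
    refine ⟨c / (p - s), ⟨?_, ?_⟩, by dsimp only; rw [div_div_cancel₀ hc.ne']; ring⟩
    · rw [lt_div_iff₀ hp, ← lt_div_iff₀' ha]; linarith
    · rw [div_lt_iff₀ hp, ← div_lt_iff₀' (ha.trans_le hab)]; linarith

end Hyperbola

namespace CalibScore

variable (D : CalibScore) {j k l : ℕ} {t : ℕ → ℝ}

lemma muk_zero : D.muk 0 = 0 := by simp [muk]

lemma muk_succ (k : ℕ) : D.muk (k + 1) = D.muk k + D.w k := Finset.sum_range_succ _ _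

lemma muk_m : D.muk D.m = 1 := D.w_sum

lemma muk_le_muk (hkl : k ≤ l) (hl : l ≤ D.m) : D.muk k ≤ D.muk l :=
  Finset.sum_le_sum_of_subset_of_nonneg (Finset.range_subset_range.mpr hkl) fun i hi _ =>
    (D.w_pos i ((Finset.mem_range.mp hi).trans_le hl)).le

lemma muk_lt_muk (hkl : k < l) (hl : l ≤ D.m) : D.muk k < D.muk l :=
  calc D.muk k < D.muk (k + 1) := by rw [muk_succ]; linarith [D.w_pos k (hkl.trans_le hl)]
    _ ≤ D.muk l := D.muk_le_muk hkl hl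

lemma muk_pos (hk : 0 < k) (hkm : k ≤ D.m) : 0 < D.muk k :=
  D.muk_zero ▸ D.muk_lt_muk hk hkm

lemma muk_lt_one (hk : k < D.m) : D.muk k < 1 :=
  D.muk_m ▸ D.muk_lt_muk hk le_rfl

lemma ck_one : D.ck 1 = 0 := by simp [ck]

lemma ck_succ_add_mul_muk (k : ℕ) :
    D.ck (k + 1) + D.s k * D.muk k = ∑ i ∈ range k, D.s i * D.w i := by
  simp only [ck, muk, Nat.add_sub_cancel, Finset.mul_sum, ← Finset.sum_add_distrib]
  exact Finset.sum_congr rfl fun i _ => by ring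

lemma ck_succ_add_mul_muk_succ (k : ℕ) :
    D.ck (k + 1) + D.s k * D.muk (k + 1) = ∑ i ∈ range (k + 1), D.s i * D.w i := by
  rw [Finset.sum_range_succ, ← D.ck_succ_add_mul_muk, muk_succ]
  ring

lemma ck_succ_succ (k : ℕ) :
    D.ck (k + 2) = D.ck (k + 1) + D.muk (k + 1) * (D.s k - D.s (k + 1)) := by
  linear_combination D.ck_succ_add_mul_muk (k + 1) - D.ck_succ_add_mul_muk_succ k

lemma ck_pos (hk : 2 ≤ k) (hkm : k ≤ D.m) : 0 < D.ck k := by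
  refine Finset.sum_pos (fun i hi => ?_) (Finset.nonempty_range_iff.mpr (by omega))
  have hi : i < k - 1 := Finset.mem_range.mp hi
  exact mul_pos (D.w_pos i (by omega)) (sub_pos.mpr (D.s_desc i (k - 1) hi (by omega)))

lemma pi_eq_ck_add : D.pi = D.ck D.m + D.s (D.m - 1) := by
  obtain ⟨k, hk⟩ : ∃ k, D.m = k + 1 := ⟨D.m - 1, by have := D.one_lt_m; omega⟩
  have := D.ck_succ_add_mul_muk_succ k
  rw [← hk, muk_m] at this
  rw [pi, ← this, hk, Nat.add_sub_cancel, mul_one]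

lemma muk_mul_pi_le (hk : k ≤ D.m) :
    D.muk k * D.pi ≤ ∑ i ∈ range k, D.s i * D.w i := by
  set A := ∑ i ∈ range k, D.s i * D.w i
  have hpi : D.pi = A + ∑ j ∈ Ico k D.m, D.s j * D.w j :=
    (Finset.sum_range_add_sum_Ico _ hk).symm
  have hrest : 1 - D.muk k = ∑ j ∈ Ico k D.m, D.w j := by
    rw [← D.w_sum, ← Finset.sum_range_add_sum_Ico _ hk, muk, add_sub_cancel_left]
  have hcross :
      D.muk k * ∑ j ∈ Ico k D.m, D.s j * D.w j ≤ A * ∑ j ∈ Ico k D.m, D.w j := by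
    rw [muk, Finset.sum_mul_sum, Finset.sum_mul_sum]
    refine Finset.sum_le_sum fun i hi => Finset.sum_le_sum fun j hj => ?_
    have hi := Finset.mem_range.mp hi
    have hj := Finset.mem_Ico.mp hj
    have hs := D.s_desc i j (by omega) hj.2
    nlinarith [mul_pos (mul_pos (D.w_pos i (by omega)) (D.w_pos j hj.2)) (sub_pos.mpr hs)]
  rw [hpi]
  linear_combination hcross - A * hrest

lemma posSel_le (ht : D.IsSelRule t) (hj : j < D.m) :
    D.posSel t ≤ D.s j * D.selRate t + D.ck (j + 1) := by
  have hdiff : D.posSel t - D.s j * D.selRate t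
      = ∑ i ∈ range D.m, D.w i * t i * (D.s i - D.s j) := by
    simp only [posSel, selRate, Finset.mul_sum, ← Finset.sum_sub_distrib]
    exact Finset.sum_congr rfl fun i _ => by ring
  have hhead : ∑ i ∈ range j, D.w i * t i * (D.s i - D.s j) ≤ D.ck (j + 1) := by
    rw [ck, Nat.add_sub_cancel]
    refine Finset.sum_le_sum fun i hi => ?_
    have hi := Finset.mem_range.mp hi
    have hs := D.s_desc i j hi hj
    nlinarith [mul_nonneg (mul_nonneg (D.w_pos i (hi.trans hj)).le (sub_nonneg.mpr hs.le))
      (sub_nonneg.mpr (ht i (hi.trans hj)).2)]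
  have htail : ∑ i ∈ Ico j D.m, D.w i * t i * (D.s i - D.s j) ≤ 0 := by
    refine Finset.sum_nonpos fun i hi => ?_
    obtain ⟨hji, him⟩ := Finset.mem_Ico.mp hi
    have hs : D.s i ≤ D.s j :=
      hji.eq_or_lt.elim (fun h => h ▸ le_rfl) fun h => (D.s_desc j i h him).le
    exact mul_nonpos_of_nonneg_of_nonpos (mul_nonneg (D.w_pos i him).le (ht i him).1) (by linarith)
  rw [← Finset.sum_range_add_sum_Ico _ hj.le] at hdiff
  linarith

noncomputable def topRule (j : ℕ) (μ : ℝ) : ℕ → ℝ :=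
  fun i => if i < j then 1 else if i = j then (μ - D.muk j) / D.w j else 0

lemma sum_mul_topRule (f : ℕ → ℝ) (hj : j < D.m) (μ : ℝ) :
    ∑ i ∈ range D.m, f i * D.topRule j μ i
      = ∑ i ∈ range j, f i + f j * ((μ - D.muk j) / D.w j) := by
  rw [← Finset.sum_range_add_sum_Ico _ hj, Finset.sum_range_succ]
  rw [Finset.sum_eq_zero (s := Ico _ _) fun i hi => ?_, add_zero]
  · congr 1
    · exact Finset.sum_congr rfl fun i hi => by simp [topRule, Finset.mem_range.mp hi]
    · simp [topRule]
  · have := (Finset.mem_Ico.mp hi).1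
    simp [topRule, show ¬ i < j by omega, show i ≠ j by omega]

lemma isSelRule_topRule (hj : j < D.m) (hμ : μ ∈ Icc (D.muk j) (D.muk (j + 1))) :
    D.IsSelRule (D.topRule j μ) := by
  have hw := D.w_pos j hj
  rw [muk_succ] at hμ
  intro i _
  unfold topRule
  split_ifs
  · exact ⟨zero_le_one, le_rfl⟩
  · exact ⟨div_nonneg (by linarith [hμ.1]) hw.le, (div_le_one hw).mpr (by linarith [hμ.2])⟩
  · exact ⟨le_rfl, zero_le_one⟩

lemma selRate_topRule (hj : j < D.m) (μ : ℝ) : D.selRate (D.topRule j μ) = μ := by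
  rw [selRate, sum_mul_topRule _ _ hj, ← muk, mul_div_cancel₀ _ (D.w_pos j hj).ne']
  ring

lemma posSel_topRule (hj : j < D.m) (μ : ℝ) :
    D.posSel (D.topRule j μ) = D.s j * μ + D.ck (j + 1) := by
  rw [posSel, sum_mul_topRule _ (fun i => D.s i * D.w i) hj, ← D.ck_succ_add_mul_muk, mul_assoc,
    mul_div_cancel₀ _ (D.w_pos j hj).ne']
  ring

lemma mul_pi_le_posSel_topRule (hj : j < D.m) {μ : ℝ}
    (hμ : μ ∈ Icc (D.muk j) (D.muk (j + 1))) : μ * D.pi ≤ D.posSel (D.topRule j μ) := by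
  have hlo := D.muk_mul_pi_le hj.le
  have hhi := D.muk_mul_pi_le (Nat.succ_le_of_lt hj)
  rw [← D.ck_succ_add_mul_muk] at hlo
  rw [← D.ck_succ_add_mul_muk_succ] at hhi
  rw [posSel_topRule _ hj]
  -- `μ ↦ s j * μ + c - μ * π` is affine, and nonnegative at both ends of the interval
  rcases le_total D.pi (D.s j) with h | h
  · nlinarith [mul_nonneg (sub_nonneg.mpr h) (sub_nonneg.mpr hμ.1)]
  · nlinarith [mul_nonneg (sub_nonneg.mpr h) (sub_nonneg.mpr hμ.2)]

lemma forr_le_pi_and_pi_le_ppv (h0 : 0 < D.selRate t) (h1 : D.selRate t < 1)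
    (h : D.selRate t * D.pi ≤ D.posSel t) : D.forr t ≤ D.pi ∧ D.pi ≤ D.ppv t := by
  refine ⟨?_, ?_⟩
  · rw [forr, div_le_iff₀ (sub_pos.mpr h1)]; linarith
  · rw [ppv, le_div_iff₀ h0]; linarith

noncomputable def ppvBound (k : ℕ) (μ : ℝ) : ℝ := D.s (k - 1) + D.ck k / μ

lemma le_ppvBound_of_feasibleWith (hk : 1 ≤ k) (hkm : k ≤ D.m) {p q : ℝ}
    (h : D.FeasibleWith μ p q) : p ≤ D.ppvBound k μ := by
  obtain ⟨hμ, -, t, ht, rfl, rfl, -⟩ := h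
  obtain ⟨j, rfl⟩ : ∃ j, k = j + 1 := ⟨k - 1, by omega⟩
  rw [ppvBound, Nat.add_sub_cancel, ppv, div_le_iff₀ hμ, add_mul, div_mul_cancel₀ _ hμ.ne']
  exact D.posSel_le ht hkm

lemma isGreatest_ppvBound (hk : 1 ≤ k) (hkm : k ≤ D.m) (hμ : μ ∈ D.Ik k) :
    IsGreatest {p | ∃ q, D.FeasibleWith μ p q ∧ q ≤ D.pi ∧ D.pi ≤ p} (D.ppvBound k μ) := by
  refine ⟨?_, fun p ⟨q, hpq, _⟩ => D.le_ppvBound_of_feasibleWith hk hkm hpq⟩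
  obtain ⟨j, rfl⟩ : ∃ j, k = j + 1 := ⟨k - 1, by omega⟩
  obtain ⟨⟨hμj, hμj'⟩, hμ0, hμ1⟩ := hμ
  rw [Nat.add_sub_cancel] at hμj
  set t := D.topRule j μ
  have hsel : D.selRate t = μ := D.selRate_topRule hkm μ
  have hppv : D.ppv t = D.ppvBound (j + 1) μ := by
    rw [ppv, hsel, D.posSel_topRule hkm, ppvBound, Nat.add_sub_cancel, add_div,
      mul_div_cancel_right₀ _ hμ0.ne']
  have hpi := D.forr_le_pi_and_pi_le_ppv (hsel ▸ hμ0) (hsel ▸ hμ1)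
    (hsel ▸ D.mul_pi_le_posSel_topRule hkm ⟨hμj.le, hμj'⟩)
  rw [hppv] at hpi
  exact ⟨D.forr t,
    ⟨hμ0, hμ1, t, D.isSelRule_topRule hkm ⟨hμj.le, hμj'⟩, hsel, hppv, rfl⟩, hpi⟩

lemma pStar_eq_ppvBound (hk : 1 ≤ k) (hkm : k ≤ D.m) (hμ : μ ∈ D.Ik k) :
    D.pStar μ = D.ppvBound k μ :=
  (D.isGreatest_ppvBound hk hkm hμ).csSup_eq

lemma eqOn_pStar_ppvBound (hk : 1 ≤ k) (hkm : k ≤ D.m) :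
    EqOn D.pStar (D.ppvBound k) (D.Ik k) :=
  fun _ hμ => D.pStar_eq_ppvBound hk hkm hμ

lemma exists_mem_Ik (hμ : μ ∈ Ioo (0 : ℝ) 1) : ∃ k, 1 ≤ k ∧ k ≤ D.m ∧ μ ∈ D.Ik k := by
  obtain ⟨i, hi, hμi, hμi'⟩ := exists_lt_le_succ_of_lt_of_le (f := D.muk)
    (D.muk_zero ▸ hμ.1) (D.muk_m ▸ hμ.2.le : μ ≤ D.muk D.m)
  exact ⟨i + 1, by omega, hi, ⟨⟨by rwa [Nat.add_sub_cancel], hμi'⟩, hμ⟩⟩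

lemma pStar_le_ppvBound (hk : 1 ≤ k) (hkm : k ≤ D.m) (hμ : μ ∈ Ioo (0 : ℝ) 1) :
    D.pStar μ ≤ D.ppvBound k μ := by
  obtain ⟨l, hl, hlm, hμl⟩ := D.exists_mem_Ik hμ
  obtain ⟨q, hq, -⟩ := (D.isGreatest_ppvBound hl hlm hμl).1
  exact D.pStar_eq_ppvBound hl hlm hμl ▸ D.le_ppvBound_of_feasibleWith hk hkm hq

lemma ppvBound_lt_ppvBound (hk : 2 ≤ k) (hkm : k ≤ D.m) {a b : ℝ} (ha : 0 < a)
    (hab : a < b) : D.ppvBound k b < D.ppvBound k a :=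
  (add_lt_add_iff_left _).mpr (div_lt_div_of_pos_left (D.ck_pos hk hkm) ha hab)

lemma pStar_eq_s_zero (hμ : μ ∈ Ioc 0 (D.muk 1)) : D.pStar μ = D.s 0 := by
  have hμ1 : μ < 1 := hμ.2.trans_lt (D.muk_lt_one D.one_lt_m)
  rw [D.pStar_eq_ppvBound le_rfl D.one_lt_m.le ⟨⟨D.muk_zero ▸ hμ.1, hμ.2⟩, hμ.1, hμ1⟩]
  simp [ppvBound, ck_one]

lemma strictAntiOn_pStar : StrictAntiOn D.pStar (Ioo (D.muk 1) 1) := by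
  intro a ha b hb hab
  have ha0 : 0 < a := (D.muk_pos one_pos D.one_lt_m.le).trans ha.1
  obtain ⟨k, hk, hkm, hak⟩ := D.exists_mem_Ik ⟨ha0, ha.2⟩
  have hk2 : 2 ≤ k := by
    by_contra hk2
    obtain rfl : k = 1 := by omega
    exact (ha.1.trans_le hak.1.2).false
  calc D.pStar b ≤ D.ppvBound k b := D.pStar_le_ppvBound hk hkm ⟨ha0.trans hab, hb.2⟩
    _ < D.ppvBound k a := D.ppvBound_lt_ppvBound hk2 hkm ha0 hab
    _ = D.pStar a := (D.pStar_eq_ppvBound hk hkm hak).symm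

lemma pStar_muk (hk : 0 < k) (hkm : k < D.m) : D.pStar (D.muk k) = D.pkF k :=
  D.pStar_eq_ppvBound hk hkm.le
    ⟨⟨D.muk_lt_muk (Nat.sub_lt hk one_pos) hkm.le, le_rfl⟩, D.muk_pos hk hkm.le,
      D.muk_lt_one hkm⟩

lemma pkF_one : D.pkF 1 = D.s 0 := by simp [pkF, ck_one]

lemma pkF_m : D.pkF D.m = D.pi := by
  rw [pkF, muk_m, div_one, pi_eq_ck_add, add_comm]

lemma ppvBound_muk_pred (hk : 2 ≤ k) (hkm : k ≤ D.m) :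
    D.ppvBound k (D.muk (k - 1)) = D.pkF (k - 1) := by
  obtain ⟨j, rfl⟩ : ∃ j, k = j + 2 := ⟨k - 2, by omega⟩
  have hμ : D.muk (j + 1) ≠ 0 := (D.muk_pos j.succ_pos (by omega)).ne'
  simp only [ppvBound, pkF, show j + 2 - 1 = j + 1 from rfl, Nat.add_sub_cancel, ck_succ_succ]
  field_simp
  ring

lemma pkF_lt_pkF_pred (hk : 2 ≤ k) (hkm : k ≤ D.m) : D.pkF k < D.pkF (k - 1) :=
  calc D.pkF k = D.ppvBound k (D.muk k) := rfl
    _ < D.ppvBound k (D.muk (k - 1)) :=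
      D.ppvBound_lt_ppvBound hk hkm (D.muk_pos (by omega) (by omega)) (D.muk_lt_muk (by omega) hkm)
    _ = D.pkF (k - 1) := D.ppvBound_muk_pred hk hkm

lemma pkF_lt_pkF (hk : 1 ≤ k) (hkl : k < l) (hlm : l ≤ D.m) : D.pkF l < D.pkF k := by
  induction l, hkl using Nat.le_induction with
  | base => simpa using D.pkF_lt_pkF_pred (k := k + 1) (by omega) hlm
  | succ l hkl ih =>
    have hl : D.pkF (l + 1) < D.pkF l := by
      simpa using D.pkF_lt_pkF_pred (k := l + 1) (by omega) hlm
    exact hl.trans (ih (by omega))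

lemma pkF_le_pkF (hk : 1 ≤ k) (hkl : k ≤ l) (hlm : l ≤ D.m) : D.pkF l ≤ D.pkF k :=
  hkl.eq_or_lt.elim (fun h => h ▸ le_rfl) fun h => (D.pkF_lt_pkF hk h hlm).le

lemma image_pStar_Ik_of_lt (hk : 1 < k) (hkm : k < D.m) :
    D.pStar '' D.Ik k = Ico (D.pkF k) (D.pkF (k - 1)) := by
  have hpos : 0 < D.muk (k - 1) := D.muk_pos (by omega) (by omega)
  have hIk : D.Ik k = Ioc (D.muk (k - 1)) (D.muk k) :=
    inter_eq_left.mpr fun μ hμ => ⟨hpos.trans hμ.1, hμ.2.trans_lt (D.muk_lt_one hkm)⟩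
  rw [(D.eqOn_pStar_ppvBound hk.le hkm.le).image_eq, hIk,
    ← D.ppvBound_muk_pred hk hkm.le]
  exact image_const_add_div_Ioc (D.ck_pos hk hkm.le) hpos (D.muk_le_muk (by omega) hkm.le)

lemma image_pStar_Ik_m : D.pStar '' D.Ik D.m = Ioo (D.pkF D.m) (D.pkF (D.m - 1)) := by
  have hm := D.one_lt_m
  have hpos : 0 < D.muk (D.m - 1) := D.muk_pos (by omega) (by omega)
  have hIk : D.Ik D.m = Ioo (D.muk (D.m - 1)) (D.muk D.m) := by
    ext μ
    simp only [Ik, muk_m, mem_inter_iff, Set.mem_Ioc, Set.mem_Ioo]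
    exact ⟨fun h => ⟨h.1.1, h.2.2⟩, fun h => ⟨⟨h.1, h.2.le⟩, hpos.trans h.1, h.2⟩⟩
  rw [(D.eqOn_pStar_ppvBound hm.le le_rfl).image_eq, hIk,
    ← D.ppvBound_muk_pred hm le_rfl]
  exact image_const_add_div_Ioo (D.ck_pos hm le_rfl) hpos (D.muk_le_muk (by omega) le_rfl)

lemma biUnion_image_pStar_Ik : ⋃ k ∈ Set.Icc 2 D.m, D.pStar '' D.Ik k = Ioo D.pi (D.s 0) := by
  have hm := D.one_lt_m
  rw [← pkF_m, ← pkF_one]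
  refine Subset.antisymm (iUnion₂_subset fun k hk => ?_) fun p hp => ?_
  · obtain ⟨hk, hkm⟩ := hk
    rcases hkm.lt_or_eq with hkm | rfl
    · rw [D.image_pStar_Ik_of_lt hk hkm]
      exact (Ico_subset_Ioo_left (D.pkF_lt_pkF (by omega) hkm le_rfl)).trans
        (Ioo_subset_Ioo_right (D.pkF_le_pkF le_rfl (by omega) (by omega)))
    · rw [D.image_pStar_Ik_m]
      exact Ioo_subset_Ioo_right (D.pkF_le_pkF le_rfl (by omega) (by omega))
  · -- the `p_k` decrease, so search for `p` among them in the order dual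
    obtain ⟨i, hi, hpi, hpi'⟩ := exists_lt_le_succ_of_lt_of_le
      (f := fun i => OrderDual.toDual (D.pkF (i + 1))) (x := OrderDual.toDual p) (n := D.m - 1)
      hp.2 (by simpa [Nat.sub_add_cancel hm.le] using hp.1.le)
    refine mem_iUnion₂.mpr ⟨i + 2, ⟨by omega, by omega⟩, ?_⟩
    rcases (show i + 2 < D.m ∨ i + 2 = D.m by omega) with him | him
    · rw [D.image_pStar_Ik_of_lt (by omega) him]
      exact ⟨hpi', hpi⟩
    · rw [him, D.image_pStar_Ik_m]
      exact ⟨hp.1, by rwa [show D.m - 1 = i + 1 by omega]⟩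

lemma disjoint_image_pStar_Ik (hk : 1 < k) (hkl : k < l) (hlm : l ≤ D.m) :
    Disjoint (D.pStar '' D.Ik k) (D.pStar '' D.Ik l) := by
  have hl : D.pStar '' D.Ik l ⊆ Iio (D.pkF (l - 1)) := by
    rcases hlm.lt_or_eq with hlm | rfl
    · rw [D.image_pStar_Ik_of_lt (by omega) hlm]; exact Ico_subset_Iio_self
    · rw [D.image_pStar_Ik_m]; exact Ioo_subset_Iio_self
  rw [D.image_pStar_Ik_of_lt hk (by omega)]
  refine Disjoint.mono_right hl (disjoint_left.mpr fun p hpk hpl => ?_)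
  exact (hpl.trans_le (D.pkF_le_pkF (by omega) (by omega) (by omega))).not_ge hpk.1

end CalibScore

/-- `p*(μ)` is constant equal to `s_1` on `I_1 = (0, μ_1]` and
strictly decreasing on `(μ_1, 1)`; consequently, for `1 < k ≤ m`, the image
`J_k = p*(I_k)` satisfies `J_k = [p_k, p_{k−1})` for `k < m` and
`J_m = (p_m, p_{m−1})`, where `p_k = s_k + c_k/μ_k` is the value `p*(μ_k)`, the
`J_k` are pairwise disjoint with union `(π, s_1)`, and `p_m = π`, `p_1 = s_1`. -/
theorem stmt8 (D : CalibScore) :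
    (∀ μ ∈ Set.Ioc (0 : ℝ) (D.muk 1), D.pStar μ = D.s 0) ∧
    StrictAntiOn D.pStar (Set.Ioo (D.muk 1) 1) ∧
    (∀ k, 1 < k → k < D.m →
      D.pStar '' D.Ik k = Set.Ico (D.pkF k) (D.pkF (k - 1))) ∧
    D.pStar '' D.Ik D.m = Set.Ioo (D.pkF D.m) (D.pkF (D.m - 1)) ∧
    (∀ k, 1 < k → k < D.m → D.pStar (D.muk k) = D.pkF k) ∧
    (⋃ k ∈ Set.Icc 2 D.m, D.pStar '' D.Ik k) = Set.Ioo D.pi (D.s 0) ∧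
    (∀ k l, 1 < k → k < l → l ≤ D.m → Disjoint (D.pStar '' D.Ik k) (D.pStar '' D.Ik l)) ∧
    D.pkF D.m = D.pi ∧ D.pkF 1 = D.s 0 :=
  ⟨fun _ hμ => D.pStar_eq_s_zero hμ, D.strictAntiOn_pStar,
    fun _ hk hkm => D.image_pStar_Ik_of_lt hk hkm, D.image_pStar_Ik_m,
    fun _ hk hkm => D.pStar_muk (by omega) hkm, D.biUnion_image_pStar_Ik,
    fun _ _ hk hkl hlm => D.disjoint_image_pStar_Ik hk hkl hlm, D.pkF_m, D.pkF_one⟩
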